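/- arXiv:1412.7211 — 5 statements merged into one kernel-verified Lean document; each statement's English description precedes it below -/
import Mathlib

section
/- The ordered monomials x^i ∂^j (i, j ≥ 0) form a linear basis of D_q(C); in particular D_q(C) is isomorphic as a vector space to the polynomial ring ℂ[x,∂]. -/
/-!
`Dq q` is the ℂ-algebra of q-difference operators on ℂ, generated by `x` and `∂`
subject to the relation `∂x = q²x∂ + (q²−1)`.  `Dα` is the Euler operator `α = 1 + x∂`.
-/

noncomputable section

/-- The defining relation of `D_q(ℂ)`: `∂ * x = q² • (x * ∂) + (q² - 1) • 1`.
Here the generator `false` is `x` and `true` is `∂`. -/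
inductive DqRel (q : ℂ) : FreeAlgebra ℂ Bool → FreeAlgebra ℂ Bool → Prop
  | rel : DqRel q (FreeAlgebra.ι ℂ true * FreeAlgebra.ι ℂ false)
      ((q ^ 2) • (FreeAlgebra.ι ℂ false * FreeAlgebra.ι ℂ true)
        + (q ^ 2 - 1) • (1 : FreeAlgebra ℂ Bool))

/-- The algebra `D_q(ℂ)` of q-difference operators on `ℂ`. -/
abbrev Dq (q : ℂ) : Type := RingQuot (DqRel q)

/-- The generator `x` of `D_q(ℂ)`. -/
def Dx (q : ℂ) : Dq q := RingQuot.mkAlgHom ℂ (DqRel q) (FreeAlgebra.ι ℂ false)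

/-- The generator `∂` of `D_q(ℂ)`. -/
def Dd (q : ℂ) : Dq q := RingQuot.mkAlgHom ℂ (DqRel q) (FreeAlgebra.ι ℂ true)

/-- The Euler operator `α = 1 + x∂`. -/
def Dα (q : ℂ) : Dq q := 1 + Dx q * Dd q

/-! The spanning half holds because the span of the ordered monomials contains `1` and is stable
under left multiplication by both generators: pushing `∂` to the right through `x^i` only
produces ordered monomials again. For independence, `D_q(ℂ)` acts on the free vector space
with basis `e_{(i,j)}` by letting each generator act as left multiplication would on the
monomial `x^i ∂^j`; then `x^i ∂^j` sends `e_{(0,0)}` to `e_{(i,j)}`. -/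

theorem Submodule.eq_top_of_one_mem_of_mul_mem {R A : Type*} [CommSemiring R] [Semiring A]
    [Algebra R A] {s : Set A} (hs : Algebra.adjoin R s = ⊤) {M : Submodule R A}
    (one_mem : 1 ∈ M) (mul_mem : ∀ a ∈ s, ∀ m ∈ M, a * m ∈ M) : M = ⊤ := by
  refine Submodule.eq_top_iff'.mpr fun a => ?_
  have ha : a ∈ Algebra.adjoin R s := hs ▸ Algebra.mem_top
  have key : ∀ m ∈ M, a * m ∈ M := by
    induction ha using Algebra.adjoin_induction with
    | mem a ha => exact mul_mem a ha
    | algebraMap r => exact fun m hm => (Algebra.smul_def r m).symm ▸ M.smul_mem r hm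
    | add a b _ _ ha hb => exact fun m hm => (add_mul a b m).symm ▸ M.add_mem (ha m hm) (hb m hm)
    | mul a b _ _ ha hb => exact fun m hm => (mul_assoc a b m).symm ▸ ha _ (hb m hm)
  simpa using key 1 one_mem

namespace Dq

variable (q : ℂ)

theorem adjoin_x_d_eq_top : Algebra.adjoin ℂ {Dx q, Dd q} = ⊤ := by
  have : {Dx q, Dd q} = Set.range (RingQuot.mkAlgHom ℂ (DqRel q) ∘ FreeAlgebra.ι ℂ) := by
    ext; simp [Dx, Dd]
  rw [this, Set.range_comp, Algebra.adjoin_image, FreeAlgebra.adjoin_range_ι, Algebra.map_top,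
    AlgHom.range_eq_top]
  exact RingQuot.mkAlgHom_surjective ℂ (DqRel q)

theorem d_mul_x : Dd q * Dx q = q ^ 2 • (Dx q * Dd q) + (q ^ 2 - 1) • 1 := by
  simpa [Dx, Dd] using RingQuot.mkAlgHom_rel ℂ (DqRel.rel (q := q))

theorem d_mul_x_pow_succ (i : ℕ) :
    Dd q * Dx q ^ (i + 1) =
      (q ^ 2) ^ (i + 1) • (Dx q ^ (i + 1) * Dd q) + ((q ^ 2) ^ (i + 1) - 1) • Dx q ^ i := by
  induction i with
  | zero => simpa using d_mul_x q
  | succ i ih =>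
    rw [pow_succ (Dx q), ← mul_assoc, ih, add_mul, smul_mul_assoc, smul_mul_assoc,
      mul_assoc, d_mul_x, mul_add, mul_smul_comm, mul_smul_comm, mul_one,
      ← mul_assoc, ← pow_succ, smul_add, smul_smul, smul_smul, ← pow_succ (Dx q)]
    module

def monomial (ij : ℕ × ℕ) : Dq q := Dx q ^ ij.1 * Dd q ^ ij.2

theorem x_mul_monomial (i j : ℕ) : Dx q * monomial q (i, j) = monomial q (i + 1, j) := by
  rw [monomial, monomial, ← mul_assoc, ← pow_succ']

theorem d_mul_monomial_zero (j : ℕ) : Dd q * monomial q (0, j) = monomial q (0, j + 1) := by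
  simp [monomial, pow_succ']

theorem d_mul_monomial_succ (i j : ℕ) :
    Dd q * monomial q (i + 1, j) =
      (q ^ 2) ^ (i + 1) • monomial q (i + 1, j + 1) +
        ((q ^ 2) ^ (i + 1) - 1) • monomial q (i, j) := by
  rw [monomial, ← mul_assoc, d_mul_x_pow_succ, add_mul, smul_mul_assoc, smul_mul_assoc, mul_assoc,
    ← pow_succ', monomial, monomial]

theorem span_monomial_eq_top : Submodule.span ℂ (Set.range (monomial q)) = ⊤ := by
  have mem (ij : ℕ × ℕ) : monomial q ij ∈ Submodule.span ℂ (Set.range (monomial q)) :=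
    Submodule.subset_span ⟨ij, rfl⟩
  refine Submodule.eq_top_of_one_mem_of_mul_mem (adjoin_x_d_eq_top q)
    (by simpa [monomial] using mem (0, 0)) ?_
  rintro a ha m hm
  induction hm using Submodule.span_induction with
  | mem m hm =>
    obtain ⟨⟨i, j⟩, rfl⟩ := hm
    obtain rfl | rfl := ha
    · simpa [x_mul_monomial] using mem (i + 1, j)
    · cases i with
      | zero => simpa [d_mul_monomial_zero] using mem (0, j + 1)
      | succ i =>
        rw [d_mul_monomial_succ]
        exact Submodule.add_mem _ (Submodule.smul_mem _ _ (mem _))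
          (Submodule.smul_mem _ _ (mem _))
  | zero => simp
  | add u v _ _ hu hv => rw [mul_add]; exact Submodule.add_mem _ hu hv
  | smul c u _ hu => rw [mul_smul_comm]; exact Submodule.smul_mem _ _ hu

def xAction : ((ℕ × ℕ) →₀ ℂ) →ₗ[ℂ] (ℕ × ℕ) →₀ ℂ :=
  Finsupp.linearCombination ℂ fun p => Finsupp.single (p.1 + 1, p.2) 1

/-- Left multiplication by `∂` on ordered monomials, read off from `d_mul_monomial_succ`; for
`p.1 = 0` the truncated index `p.1 - 1` is harmless because its coefficient vanishes. -/
def dAction : ((ℕ × ℕ) →₀ ℂ) →ₗ[ℂ] (ℕ × ℕ) →₀ ℂ :=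
  Finsupp.linearCombination ℂ fun p =>
    (q ^ 2) ^ p.1 • Finsupp.single (p.1, p.2 + 1) 1 +
      ((q ^ 2) ^ p.1 - 1) • Finsupp.single (p.1 - 1, p.2) 1

theorem xAction_single (i j : ℕ) :
    xAction (Finsupp.single (i, j) 1) = Finsupp.single (i + 1, j) 1 := by
  simp [xAction]

theorem dAction_single (i j : ℕ) :
    dAction q (Finsupp.single (i, j) 1) =
      (q ^ 2) ^ i • Finsupp.single (i, j + 1) 1 +
        ((q ^ 2) ^ i - 1) • Finsupp.single (i - 1, j) 1 := by
  simp [dAction]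

theorem dAction_mul_xAction :
    dAction q * xAction = q ^ 2 • (xAction * dAction q) + (q ^ 2 - 1) • 1 := by
  refine Finsupp.basisSingleOne.ext fun ⟨i, j⟩ => ?_
  simp only [Finsupp.coe_basisSingleOne, LinearMap.add_apply, LinearMap.smul_apply,
    Module.End.mul_apply, Module.End.one_apply, xAction_single, dAction_single, map_add, map_smul]
  cases i with
  | zero => simp
  | succ i => simp only [Nat.add_sub_cancel]; module

def action : Dq q →ₐ[ℂ] Module.End ℂ ((ℕ × ℕ) →₀ ℂ) :=
  RingQuot.liftAlgHom ℂ ⟨FreeAlgebra.lift ℂ fun b => if b then dAction q else xAction, by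
    rintro _ _ ⟨⟩
    simpa using dAction_mul_xAction q⟩

theorem action_monomial (ij : ℕ × ℕ) :
    action q (monomial q ij) (Finsupp.single (0, 0) 1) = Finsupp.single ij 1 := by
  have hx : action q (Dx q) = xAction := by simp [action, Dx]
  have hd : action q (Dd q) = dAction q := by simp [action, Dd]
  have hx_pow (i k j : ℕ) :
      (xAction ^ i) (Finsupp.single (k, j) 1) = Finsupp.single (k + i, j) 1 := by
    induction i with
    | zero => simp
    | succ i ih => rw [pow_succ', Module.End.mul_apply, ih, xAction_single, add_assoc]
  have hd_pow (j : ℕ) : (dAction q ^ j) (Finsupp.single (0, 0) 1) = Finsupp.single (0, j) 1 := by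
    induction j with
    | zero => simp
    | succ j ih => simp [pow_succ', ih, dAction_single]
  simp [monomial, hx, hd, hd_pow, hx_pow]

theorem linearIndependent_monomial : LinearIndependent ℂ (monomial q) := by
  refine LinearIndependent.of_comp
    (LinearMap.applyₗ (Finsupp.single (0, 0) 1) ∘ₗ (action q).toLinearMap) ?_
  convert Finsupp.linearIndependent_single_one ℂ (ℕ × ℕ) using 1
  funext ij
  exact action_monomial q ij

def pbwBasis : Module.Basis (ℕ × ℕ) ℂ (Dq q) :=
  .mk (linearIndependent_monomial q) (span_monomial_eq_top q).ge

theorem pbwBasis_apply (ij : ℕ × ℕ) : pbwBasis q ij = monomial q ij :=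
  Module.Basis.mk_apply ..

end Dq

theorem dq_pbw_basis_general (q : ℂ) :
    (∃ b : Module.Basis (ℕ × ℕ) ℂ (Dq q), ∀ ij : ℕ × ℕ, b ij = (Dx q) ^ ij.1 * (Dd q) ^ ij.2) ∧
    Nonempty (Dq q ≃ₗ[ℂ] MvPolynomial (Fin 2) ℂ) :=
  ⟨⟨Dq.pbwBasis q, Dq.pbwBasis_apply q⟩,
    ⟨(Dq.pbwBasis q).equiv (MvPolynomial.basisMonomials (Fin 2) ℂ)
      ((finTwoArrowEquiv ℕ).symm.trans Finsupp.equivFunOnFinite.symm)⟩⟩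

/-- the ordered monomials `x^i ∂^j` form a ℂ-basis of `D_q(ℂ)`;
in particular `D_q(ℂ)` is isomorphic as a vector space to the polynomial ring in
two variables. -/
theorem dq_pbw_basis (q : ℂ) (hq : q ≠ 0) :
    (∃ b : Module.Basis (ℕ × ℕ) ℂ (Dq q), ∀ ij : ℕ × ℕ, b ij = (Dx q) ^ ij.1 * (Dd q) ^ ij.2) ∧
    Nonempty (Dq q ≃ₗ[ℂ] MvPolynomial (Fin 2) ℂ) :=
  dq_pbw_basis_general q
end
end

section
/- If q is a primitive ℓ-th root of unity in ℂ with ℓ > 1 odd, then x^ℓ and ∂^ℓ are central in D_q(C). -/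
/-!
`Dq q` is the ℂ-algebra of q-difference operators on ℂ, generated by `x` and `∂`
subject to the relation `∂x = q²x∂ + (q²−1)`.  `Dα` is the Euler operator `α = 1 + x∂`.
-/

noncomputable section

/-!
If `∂x = c·x∂ + (c − 1)`, induction gives `∂xⁿ = cⁿ·xⁿ∂ + (cⁿ − 1)·xⁿ⁻¹`, and the same formula
with the roles of `x` and `∂` exchanged holds for `∂ⁿx` (it is the first one in the opposite
algebra). For `c = q²` with `q^ℓ = 1` both correction terms vanish at `n = ℓ`, so `x^ℓ` and `∂^ℓ`
commute with both generators, hence with all of `D_q(ℂ)`.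
-/

def IsQWeylPair {R A : Type*} [CommRing R] [Ring A] [Algebra R A] (c : R) (d x : A) : Prop :=
  d * x = c • (x * d) + (c - 1) • (1 : A)

namespace IsQWeylPair

variable {R A : Type*} [CommRing R] [Ring A] [Algebra R A] {c : R} {d x : A}

theorem mul_pow_succ (h : IsQWeylPair c d x) (n : ℕ) :
    d * x ^ (n + 1) = c ^ (n + 1) • (x ^ (n + 1) * d) + (c ^ (n + 1) - 1) • x ^ n := by
  rw [IsQWeylPair] at h
  induction n with
  | zero => simpa using h
  | succ n ih =>
    rw [pow_succ x (n + 1), ← mul_assoc, ih, add_mul, smul_mul_assoc, smul_mul_assoc, mul_assoc, h]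
    simp only [mul_add, mul_smul_comm, smul_add, smul_smul, mul_one, ← mul_assoc, ← pow_succ]
    match_scalars <;> ring

theorem op (h : IsQWeylPair c d x) : IsQWeylPair c (MulOpposite.op x) (MulOpposite.op d) := by
  apply MulOpposite.unop_injective
  simpa [IsQWeylPair] using h

theorem pow_succ_mul (h : IsQWeylPair c d x) (n : ℕ) :
    d ^ (n + 1) * x = c ^ (n + 1) • (x * d ^ (n + 1)) + (c ^ (n + 1) - 1) • d ^ n := by
  simpa using congrArg MulOpposite.unop (h.op.mul_pow_succ n)

theorem commute_pow (h : IsQWeylPair c d x) {n : ℕ} (hc : c ^ n = 1) : Commute d (x ^ n) := by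
  cases n with
  | zero => simp
  | succ n => simp [Commute, SemiconjBy, h.mul_pow_succ, hc]

theorem pow_commute (h : IsQWeylPair c d x) {n : ℕ} (hc : c ^ n = 1) : Commute (d ^ n) x := by
  cases n with
  | zero => simp
  | succ n => simp [Commute, SemiconjBy, h.pow_succ_mul, hc]

end IsQWeylPair

theorem Subalgebra.mem_center_of_forall_commute {R A : Type*} [CommSemiring R] [Semiring A]
    [Algebra R A] {s : Set A} (hs : Algebra.adjoin R s = ⊤) {a : A} (h : ∀ b ∈ s, Commute a b) :
    a ∈ Subalgebra.center R A :=
  Subalgebra.mem_center_iff.2 fun _ =>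
    (Algebra.commute_of_mem_adjoin_of_forall_mem_commute (hs ▸ Algebra.mem_top) h).eq.symm

theorem isQWeylPair_Dd_Dx (q : ℂ) : IsQWeylPair (q ^ 2) (Dd q) (Dx q) := by
  unfold IsQWeylPair Dd Dx
  rw [← map_mul, RingQuot.mkAlgHom_rel ℂ DqRel.rel]
  simp

theorem adjoin_Dx_Dd (q : ℂ) : Algebra.adjoin ℂ {Dx q, Dd q} = ⊤ := by
  have hgen : ({Dx q, Dd q} : Set (Dq q)) =
      RingQuot.mkAlgHom ℂ (DqRel q) '' Set.range (FreeAlgebra.ι ℂ) := by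
    ext; simp [Dx, Dd, eq_comm]
  rw [hgen, Algebra.adjoin_image, FreeAlgebra.adjoin_range_ι, Algebra.map_top,
    AlgHom.range_eq_top]
  exact RingQuot.mkAlgHom_surjective ℂ (DqRel q)

theorem mem_center_Dq {q : ℂ} {a : Dq q} (hx : Commute a (Dx q)) (hd : Commute a (Dd q)) :
    a ∈ Subalgebra.center ℂ (Dq q) :=
  Subalgebra.mem_center_of_forall_commute (adjoin_Dx_Dd q) (by simp [hx, hd])

theorem dq_powers_central_general (q : ℂ) (ℓ : ℕ)
    (hq : IsPrimitiveRoot q ℓ) :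
    (Dx q) ^ ℓ ∈ Subalgebra.center ℂ (Dq q) ∧
    (Dd q) ^ ℓ ∈ Subalgebra.center ℂ (Dq q) := by
  have hq2 : (q ^ 2) ^ ℓ = 1 := by rw [← pow_mul, mul_comm, pow_mul, hq.pow_eq_one, one_pow]
  have hrel := isQWeylPair_Dd_Dx q
  exact ⟨mem_center_Dq ((Commute.refl _).pow_left ℓ) (hrel.commute_pow hq2).symm,
    mem_center_Dq (hrel.pow_commute hq2) ((Commute.refl _).pow_left ℓ)⟩

/-- if `q` is a primitive ℓ-th root of unity with `ℓ > 1` odd, then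
`x^ℓ` and `∂^ℓ` are central in `D_q(ℂ)`. -/
theorem dq_powers_central (q : ℂ) (ℓ : ℕ) (hℓ : 1 < ℓ) (hodd : Odd ℓ)
    (hq : IsPrimitiveRoot q ℓ) :
    (Dx q) ^ ℓ ∈ Subalgebra.center ℂ (Dq q) ∧
    (Dd q) ^ ℓ ∈ Subalgebra.center ℂ (Dq q) :=
  dq_powers_central_general q ℓ hq
end
end

section
/- If q is a primitive ℓ-th root of unity with ℓ > 1 odd, then in D_q(C) the Euler operator α = 1 + x∂ satisfies α^ℓ = 1 + x^ℓ ∂^ℓ. -/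
/-!
`Dq q` is the ℂ-algebra of q-difference operators on ℂ, generated by `x` and `∂`
subject to the relation `∂x = q²x∂ + (q²−1)`.  `Dα` is the Euler operator `α = 1 + x∂`.
-/

noncomputable section

/-!
From `α x = q² x α` one gets `x^(n+1) ∂^(n+1) = x^n (α - 1) ∂^n = (q^(-2n) α - 1) x^n ∂^n`,
hence `x^ℓ ∂^ℓ = ∏_{j<ℓ} (ζ^j α - 1)` with `ζ = q^(-2)`. As `ℓ` is odd, `ζ` is again a
primitive `ℓ`-th root of unity, and `∏_{j<ℓ} (ζ^j T - 1) = T^ℓ - 1`: pulling out the factors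
`ζ^j`, whose product `ζ^(ℓ(ℓ-1)/2)` is `1`, leaves `∏_{j<ℓ} (T - ζ^(-j))`.
-/

open Polynomial Finset

theorem IsPrimitiveRoot.prod_range_pow_eq_one_of_odd {M : Type*} [CommMonoid M] {ζ : M} {ℓ : ℕ}
    (hζ : IsPrimitiveRoot ζ ℓ) (hodd : Odd ℓ) : ∏ j ∈ range ℓ, ζ ^ j = 1 := by
  obtain ⟨k, rfl⟩ := hodd
  have hsum : ∑ j ∈ range (2 * k + 1), j = (2 * k + 1) * k := by
    rw [sum_range_id, add_tsub_cancel_right, mul_comm 2 k, ← mul_assoc,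
      Nat.mul_div_cancel _ two_pos]
  rw [prod_pow_eq_pow_sum, hsum, pow_mul, hζ.pow_eq_one, one_pow]

theorem IsPrimitiveRoot.prod_range_C_pow_mul_X_sub_one {K : Type*} [Field K] {ζ : K} {ℓ : ℕ}
    (hζ : IsPrimitiveRoot ζ ℓ) (hodd : Odd ℓ) :
    ∏ j ∈ range ℓ, (C (ζ ^ j) * X - 1) = X ^ ℓ - 1 := by
  have hζ0 : ζ ≠ 0 := hζ.ne_zero hodd.pos.ne'
  have hfactor (j : ℕ) : C (ζ ^ j) * X - 1 = C (ζ ^ j) * (X - C (ζ⁻¹ ^ j * 1)) := by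
    rw [mul_sub, ← C_mul, mul_one, ← mul_pow, mul_inv_cancel₀ hζ0, one_pow, C_1]
  rw [prod_congr rfl fun j _ => hfactor j, prod_mul_distrib, ← map_prod,
    hζ.prod_range_pow_eq_one_of_odd hodd, C_1, one_mul,
    ← X_pow_sub_C_eq_prod hζ.inv hodd.pos (one_pow ℓ), C_1]

theorem Dd_mul_Dx (q : ℂ) : Dd q * Dx q = q ^ 2 • (Dx q * Dd q) + (q ^ 2 - 1) • 1 := by
  simpa [Dd, Dx] using RingQuot.mkAlgHom_rel ℂ (DqRel.rel (q := q))

theorem Dα_mul_Dx (q : ℂ) : Dα q * Dx q = q ^ 2 • (Dx q * Dα q) := by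
  simp only [Dα, add_mul, mul_add, one_mul, mul_one, mul_assoc, Dd_mul_Dx, mul_smul_comm, smul_add]
  module

theorem Dx_pow_mul_Dα {q : ℂ} (hq : q ≠ 0) (n : ℕ) :
    Dx q ^ n * Dα q = (q ^ 2)⁻¹ ^ n • (Dα q * Dx q ^ n) := by
  induction n with
  | zero => simp
  | succ n ih =>
    have hx : Dx q * Dα q = (q ^ 2)⁻¹ • (Dα q * Dx q) := by
      rw [Dα_mul_Dx, smul_smul, inv_mul_cancel₀ (pow_ne_zero 2 hq), one_smul]
    rw [pow_succ, mul_assoc, hx, mul_smul_comm, ← mul_assoc, ih, smul_mul_assoc, smul_smul,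
      mul_assoc, ← pow_succ, pow_succ' (q ^ 2)⁻¹]

theorem Dx_pow_succ_mul_Dd_pow_succ {q : ℂ} (hq : q ≠ 0) (n : ℕ) :
    Dx q ^ (n + 1) * Dd q ^ (n + 1) = ((q ^ 2)⁻¹ ^ n • Dα q - 1) * (Dx q ^ n * Dd q ^ n) := by
  have hxd : Dx q * Dd q = Dα q - 1 := by rw [Dα]; abel
  calc Dx q ^ (n + 1) * Dd q ^ (n + 1) = Dx q ^ n * (Dx q * Dd q) * Dd q ^ n := by
        rw [pow_succ, pow_succ']; noncomm_ring
    _ = (Dx q ^ n * Dα q - Dx q ^ n) * Dd q ^ n := by rw [hxd, mul_sub, mul_one]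
    _ = ((q ^ 2)⁻¹ ^ n • Dα q - 1) * (Dx q ^ n * Dd q ^ n) := by
        rw [Dx_pow_mul_Dα hq, sub_mul, sub_mul, smul_mul_assoc, smul_mul_assoc, one_mul,
          mul_assoc]

theorem Dx_pow_mul_Dd_pow {q : ℂ} (hq : q ≠ 0) (n : ℕ) :
    Dx q ^ n * Dd q ^ n = aeval (Dα q) (∏ j ∈ range n, (C ((q ^ 2)⁻¹ ^ j) * X - 1)) := by
  induction n with
  | zero => simp
  | succ n ih =>
    rw [prod_range_succ, mul_comm, map_mul, Dx_pow_succ_mul_Dd_pow_succ hq, ih]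
    simp [Algebra.smul_def]

theorem dq_euler_power_general (q : ℂ) (ℓ : ℕ) (hodd : Odd ℓ)
    (hq : IsPrimitiveRoot q ℓ) :
    (Dα q) ^ ℓ = 1 + (Dx q) ^ ℓ * (Dd q) ^ ℓ := by
  have hq0 : q ≠ 0 := hq.ne_zero hodd.pos.ne'
  have hζ : IsPrimitiveRoot (q ^ 2)⁻¹ ℓ :=
    (hq.pow_of_coprime 2 (Nat.coprime_two_left.2 hodd)).inv
  rw [Dx_pow_mul_Dd_pow hq0, hζ.prod_range_C_pow_mul_X_sub_one hodd]
  simp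

/-- if `q` is a primitive ℓ-th root of unity with `ℓ > 1` odd, then the
Euler operator `α = 1 + x∂` satisfies `α^ℓ = 1 + x^ℓ ∂^ℓ` in `D_q(ℂ)`. -/
theorem dq_euler_power (q : ℂ) (ℓ : ℕ) (hℓ : 1 < ℓ) (hodd : Odd ℓ)
    (hq : IsPrimitiveRoot q ℓ) :
    (Dα q) ^ ℓ = 1 + (Dx q) ^ ℓ * (Dd q) ^ ℓ :=
  dq_euler_power_general q ℓ hodd hq
end
end

section
/- Let q be a primitive ℓ-th root of unity, c, w ∈ ℂ with 1+cw ≠ 0, γ an ℓ-th root of 1+cw, and D_P := D_q(C)/D_q(C)(x^ℓ − c, ∂^ℓ − w, α − γ). Then for 1 ≤ m ≤ ℓ, the identities c·∂^m = ∏_{i=ℓ−m+1}^{ℓ}(q^{2i}γ − 1) x^{ℓ−m} and w·x^m = ∏_{i=1}^{m}(q^{2i}γ − 1) ∂^{ℓ−m} hold in D_P. -/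
/-!
`Dq q` is the ℂ-algebra of q-difference operators on ℂ, generated by `x` and `∂`
subject to the relation `∂x = q²x∂ + (q²−1)`.  `Dα` is the Euler operator `α = 1 + x∂`.
-/

noncomputable section

/-!
Let `e` be a vector of a `D_q`-module with `α • e = γ • e`. From `∂x = q²α − 1`, `x∂ = α − 1`,
`αx = q²xα` and `∂α = q²α∂`, the operator `∂` sends `x^(j+1) • e` to `(q^(2(j+1))γ − 1) x^j • e`
and `x` sends `∂^(j+1) • e` to `(q^(−2j)γ − 1) ∂^j • e`. Iterating these from `x^ℓ • e = c • e`
and `∂^ℓ • e = w • e`, and using `q^(−2j) = q^(2(ℓ−j))`, gives both identities for the class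
`e` of `1` in `D_P`.
-/

theorem Submodule.Quotient.mk_eq_smul_mk_one {A : Type*} [Ring A] {I : Submodule A A} (u : A) :
    Submodule.Quotient.mk (p := I) u = u • Submodule.Quotient.mk 1 := by
  rw [← Submodule.Quotient.mk_smul, smul_eq_mul, mul_one]

theorem Submodule.Quotient.smul_mk_one_eq_of_sub_algebraMap_mem {R A : Type*} [CommRing R] [Ring A]
    [Algebra R A] {I : Submodule A A} {u : A} {a : R} (h : u - algebraMap R A a ∈ I) :
    u • (Submodule.Quotient.mk 1 : A ⧸ I) = a • Submodule.Quotient.mk 1 := by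
  rw [← Submodule.Quotient.mk_smul, ← Submodule.Quotient.mk_smul, Submodule.Quotient.eq,
    smul_eq_mul, mul_one, Algebra.smul_def, mul_one]
  exact h

namespace Dq

variable {q : ℂ}

theorem Dd_mul_Dx : Dd q * Dx q = q ^ 2 • (Dx q * Dd q) + (q ^ 2 - 1) • (1 : Dq q) := by
  simpa [Dd, Dx] using RingQuot.mkAlgHom_rel ℂ (DqRel.rel (q := q))

theorem Dx_mul_Dd : Dx q * Dd q = Dα q - 1 := by
  rw [Dα, add_sub_cancel_left]

theorem Dd_mul_Dx_eq_smul_Dα_sub_one : Dd q * Dx q = q ^ 2 • Dα q - 1 := by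
  rw [Dd_mul_Dx, Dα, smul_add]
  module

theorem Dα_mul_Dx : Dα q * Dx q = q ^ 2 • (Dx q * Dα q) := by
  rw [Dα, add_mul, one_mul, mul_assoc, Dd_mul_Dx, mul_add, mul_smul_comm, mul_smul_comm,
    mul_one, mul_add, mul_one, ← mul_assoc]
  module

theorem Dd_mul_Dα : Dd q * Dα q = q ^ 2 • (Dα q * Dd q) := by
  rw [Dα, mul_add, mul_one, add_mul, one_mul, ← mul_assoc, Dd_mul_Dx, add_mul, smul_mul_assoc,
    smul_mul_assoc, one_mul, mul_assoc]
  module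

theorem Dα_mul_Dx_pow (k : ℕ) : Dα q * Dx q ^ k = q ^ (2 * k) • (Dx q ^ k * Dα q) := by
  induction k with
  | zero => simp
  | succ k ih =>
    rw [pow_succ', ← mul_assoc, Dα_mul_Dx, smul_mul_assoc, mul_assoc, ih, mul_smul_comm,
      smul_smul, ← mul_assoc, ← pow_succ', ← pow_add]
    ring_nf

theorem Dd_pow_mul_Dα (k : ℕ) : Dd q ^ k * Dα q = q ^ (2 * k) • (Dα q * Dd q ^ k) := by
  induction k with
  | zero => simp
  | succ k ih =>
    rw [pow_succ, mul_assoc, Dd_mul_Dα, mul_smul_comm, ← mul_assoc, ih, smul_mul_assoc,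
      smul_smul, mul_assoc, ← pow_succ, ← pow_add]
    ring_nf

section Module

variable {M : Type*} [AddCommGroup M] [Module (Dq q) M] [Module ℂ M] [IsScalarTower ℂ (Dq q) M]
  {ℓ : ℕ} {c w γ : ℂ} {e : M}

theorem Dd_smul_Dx_pow_succ_smul (hα : Dα q • e = γ • e) (j : ℕ) :
    Dd q • Dx q ^ (j + 1) • e = (q ^ (2 * (j + 1)) * γ - 1) • Dx q ^ j • e := by
  have h : Dd q * Dx q ^ (j + 1) = q ^ (2 * (j + 1)) • (Dx q ^ j * Dα q) - Dx q ^ j := by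
    rw [pow_succ', ← mul_assoc, Dd_mul_Dx_eq_smul_Dα_sub_one, sub_mul, one_mul, smul_mul_assoc,
      Dα_mul_Dx_pow, smul_smul, ← pow_add]
    ring_nf
  rw [smul_smul, h, sub_smul, smul_assoc, mul_smul, hα, sub_smul, mul_smul, smul_comm _ γ,
    one_smul]

/-- `t` plays the role of `q^(-2j)`. -/
theorem Dx_smul_Dd_pow_succ_smul (hα : Dα q • e = γ • e) {t : ℂ} {j : ℕ}
    (ht : t * q ^ (2 * j) = 1) :
    Dx q • Dd q ^ (j + 1) • e = (t * γ - 1) • Dd q ^ j • e := by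
  have h : Dα q • Dd q ^ j • e = (t * γ) • Dd q ^ j • e := calc
    Dα q • Dd q ^ j • e = t • (q ^ (2 * j) • (Dα q * Dd q ^ j)) • e := by
      rw [smul_assoc, smul_smul, smul_smul, ht, one_smul]
    _ = (t * γ) • Dd q ^ j • e := by
      rw [← Dd_pow_mul_Dα, mul_smul, hα, smul_comm _ γ, smul_smul]
  rw [smul_smul, pow_succ', ← mul_assoc, Dx_mul_Dd, sub_mul, one_mul, sub_smul, mul_smul, h,
    sub_smul, one_smul]

theorem Dd_pow_smul_Dx_pow_add_smul (hα : Dα q • e = γ • e) (k m : ℕ) :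
    Dd q ^ m • Dx q ^ (k + m) • e
      = (∏ i ∈ Finset.Icc (k + 1) (k + m), (q ^ (2 * i) * γ - 1)) • Dx q ^ k • e := by
  induction m with
  | zero => simp
  | succ m ih =>
    rw [pow_succ, mul_smul, ← add_assoc, Dd_smul_Dx_pow_succ_smul hα, smul_comm, ih, smul_smul,
      Finset.prod_Icc_succ_top (by omega), mul_comm]

theorem Dx_pow_smul_Dd_pow_smul (hα : Dα q • e = γ • e) {m : ℕ} (hq : q ^ ℓ = 1)
    (hm : m ≤ ℓ) :
    Dx q ^ m • Dd q ^ ℓ • e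
      = (∏ i ∈ Finset.Icc 1 m, (q ^ (2 * i) * γ - 1)) • Dd q ^ (ℓ - m) • e := by
  induction m with
  | zero => simp
  | succ m ih =>
    have ht : q ^ (2 * (m + 1)) * q ^ (2 * (ℓ - (m + 1))) = 1 := by
      rw [← pow_add, ← mul_add, Nat.add_sub_cancel' hm, pow_mul', hq, one_pow]
    rw [pow_succ', mul_smul, ih (by omega), smul_comm, show ℓ - m = ℓ - (m + 1) + 1 by omega,
      Dx_smul_Dd_pow_succ_smul hα ht, smul_smul, Finset.prod_Icc_succ_top (by omega)]

theorem smul_Dd_pow_smul_eq (hx : Dx q ^ ℓ • e = c • e) (hα : Dα q • e = γ • e) {m : ℕ}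
    (hm : m ≤ ℓ) :
    c • Dd q ^ m • e
      = (∏ i ∈ Finset.Icc (ℓ - m + 1) ℓ, (q ^ (2 * i) * γ - 1)) • Dx q ^ (ℓ - m) • e := by
  rw [← smul_comm, ← hx, ← Nat.sub_add_cancel hm, Dd_pow_smul_Dx_pow_add_smul hα,
    Nat.sub_add_cancel hm]

theorem smul_Dx_pow_smul_eq (hd : Dd q ^ ℓ • e = w • e) (hα : Dα q • e = γ • e)
    (hq : q ^ ℓ = 1) {m : ℕ} (hm : m ≤ ℓ) :
    w • Dx q ^ m • e = (∏ i ∈ Finset.Icc 1 m, (q ^ (2 * i) * γ - 1)) • Dd q ^ (ℓ - m) • e := by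
  rw [← smul_comm, ← hd, Dx_pow_smul_Dd_pow_smul hα hq hm]

end Module

end Dq

theorem dq_point_module_relations_general (q : ℂ) (ℓ : ℕ)
    (hq : IsPrimitiveRoot q ℓ) (c w γ : ℂ) (m : ℕ) (hm2 : m ≤ ℓ) :
    letI I : Submodule (Dq q) (Dq q) := Submodule.span (Dq q)
        {(Dx q) ^ ℓ - algebraMap ℂ (Dq q) c,
         (Dd q) ^ ℓ - algebraMap ℂ (Dq q) w,
         Dα q - algebraMap ℂ (Dq q) γ}
    (Submodule.Quotient.mk (p := I) (c • (Dd q) ^ m)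
        = Submodule.Quotient.mk (p := I)
          ((∏ i ∈ Finset.Icc (ℓ - m + 1) ℓ, (q ^ (2 * i) * γ - 1)) • (Dx q) ^ (ℓ - m))) ∧
    (Submodule.Quotient.mk (p := I) (w • (Dx q) ^ m)
        = Submodule.Quotient.mk (p := I)
          ((∏ i ∈ Finset.Icc 1 m, (q ^ (2 * i) * γ - 1)) • (Dd q) ^ (ℓ - m))) := by
  -- the pattern `_ • _` keeps `mk 1` itself from being rewritten
  simp only [Submodule.Quotient.mk_eq_smul_mk_one (_ • _), smul_assoc]
  constructor
  · exact Dq.smul_Dd_pow_smul_eq (e := Submodule.Quotient.mk 1)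
      (Submodule.Quotient.smul_mk_one_eq_of_sub_algebraMap_mem (Submodule.subset_span (by simp)))
      (Submodule.Quotient.smul_mk_one_eq_of_sub_algebraMap_mem (Submodule.subset_span (by simp)))
      hm2
  · exact Dq.smul_Dx_pow_smul_eq (e := Submodule.Quotient.mk 1)
      (Submodule.Quotient.smul_mk_one_eq_of_sub_algebraMap_mem (Submodule.subset_span (by simp)))
      (Submodule.Quotient.smul_mk_one_eq_of_sub_algebraMap_mem (Submodule.subset_span (by simp)))
      hq.pow_eq_one hm2

/-- in `D_P = D_q(ℂ)/D_q(ℂ)(x^ℓ − c, ∂^ℓ − w, α − γ)` (quotient by the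
left ideal), for `1 ≤ m ≤ ℓ` one has
`c·∂^m = ∏_{i=ℓ−m+1}^{ℓ}(q^{2i}γ − 1) x^{ℓ−m}` and
`w·x^m = ∏_{i=1}^{m}(q^{2i}γ − 1) ∂^{ℓ−m}`. -/
theorem dq_point_module_relations (q : ℂ) (ℓ : ℕ) (hℓ : 1 < ℓ)
    (hq : IsPrimitiveRoot q ℓ) (c w γ : ℂ) (hcw : 1 + c * w ≠ 0)
    (hγ : γ ^ ℓ = 1 + c * w) (m : ℕ) (hm1 : 1 ≤ m) (hm2 : m ≤ ℓ) :
    letI I : Submodule (Dq q) (Dq q) := Submodule.span (Dq q)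
        {(Dx q) ^ ℓ - algebraMap ℂ (Dq q) c,
         (Dd q) ^ ℓ - algebraMap ℂ (Dq q) w,
         Dα q - algebraMap ℂ (Dq q) γ}
    (Submodule.Quotient.mk (p := I) (c • (Dd q) ^ m)
        = Submodule.Quotient.mk (p := I)
          ((∏ i ∈ Finset.Icc (ℓ - m + 1) ℓ, (q ^ (2 * i) * γ - 1)) • (Dx q) ^ (ℓ - m))) ∧
    (Submodule.Quotient.mk (p := I) (w • (Dx q) ^ m)
        = Submodule.Quotient.mk (p := I)
          ((∏ i ∈ Finset.Icc 1 m, (q ^ (2 * i) * γ - 1)) • (Dd q) ^ (ℓ - m))) :=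
  dq_point_module_relations_general q ℓ hq c w γ m hm2
end
end

section
/- Let H be a Hopf algebra, D an algebra in H-modules, and μ : H → D a quantum moment map (i.e. μ(h)·a = (h₍₁₎ ▷ a)·μ(h₍₂₎) for all h ∈ H, a ∈ D). Let η : H → ℂ be a character and I_η the left ideal of D generated by {μ(h) − η(h)·1 : h ∈ H}. Then I_η is an H-submodule of D, and the multiplication of D induces a well-defined associative algebra structure on the H-invariants (D/I_η)^H. -/
/-!
For an invariant `a`, the moment map identity gives `μ(h) a ≡ η(h₍₂₎) (h₍₁₎ ▷ a) ≡ η(h) a`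
modulo `I_η`, so `I_η · b ⊆ I_η` for every invariant `b`. This makes the product of invariant
classes independent of the representatives, and the module-algebra rule shows that invariants
are closed under multiplication. Stability of `I_η` comes from the equivariance
`h ▷ μ(g) = μ(h₍₁₎ g S(h₍₂₎))` of the moment map together with
`η(h₍₁₎ g S(h₍₂₎)) = η(g) ε(h)`.
-/

noncomputable section

open TensorProduct

variable {H D : Type*} [Ring H] [HopfAlgebra ℂ H] [Ring D] [Algebra ℂ D]

/-- Given an action `act : H → End(D)`, the map `H ⊗ (D ⊗ D) → D`,
`h ⊗ a ⊗ b ↦ Σ (h₍₁₎ ▷ a) * (h₍₂₎ ▷ b)`, used to express that `D` is an `H`-module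
algebra. -/
def moduleAlgebraRHS (act : H →ₗ[ℂ] D →ₗ[ℂ] D) : H ⊗[ℂ] (D ⊗[ℂ] D) →ₗ[ℂ] D :=
  LinearMap.mul' ℂ D
    ∘ₗ TensorProduct.map (TensorProduct.lift act) (TensorProduct.lift act)
    ∘ₗ (TensorProduct.tensorTensorTensorComm ℂ H H D D).toLinearMap
    ∘ₗ TensorProduct.map Coalgebra.comul LinearMap.id

/-- Given an action `act : H → End(D)` and a linear map `μ : H → D`, the map
`H ⊗ D → D`, `h ⊗ a ↦ Σ (h₍₁₎ ▷ a) · μ(h₍₂₎)`, appearing on the right-hand side of the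
quantum moment map identity. -/
def momentRHS (act : H →ₗ[ℂ] D →ₗ[ℂ] D) (μ : H →ₗ[ℂ] D) : H ⊗[ℂ] D →ₗ[ℂ] D :=
  LinearMap.mul' ℂ D
    ∘ₗ TensorProduct.map (TensorProduct.lift act) μ
    ∘ₗ (TensorProduct.assoc ℂ H D H).symm.toLinearMap
    ∘ₗ TensorProduct.map LinearMap.id (TensorProduct.comm ℂ H D).toLinearMap
    ∘ₗ (TensorProduct.assoc ℂ H H D).toLinearMap
    ∘ₗ TensorProduct.map Coalgebra.comul LinearMap.id


namespace Coalgebra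

lemma sum_counit_right_smul {R C ι : Type*} [CommSemiring R] [AddCommMonoid C] [Module R C]
    [Coalgebra R C] {c : C} (𝓡 : Repr R c ι) :
    ∑ i ∈ 𝓡.index, counit (R := R) (𝓡.right i) • 𝓡.left i = c := by
  simpa only [map_sum, TensorProduct.lift.tmul, LinearMap.flip_apply, LinearMap.lsmul_apply,
    one_smul] using
    congr(TensorProduct.lift (LinearMap.lsmul R C).flip $(sum_tmul_counit_eq (R := R) 𝓡))

end Coalgebra

lemma act_eq_sum_counit_smul {R C M : Type*} [CommSemiring R] [AddCommMonoid C] [Module R C]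
    [Coalgebra R C] [AddCommMonoid M] [Module R M] (act : C →ₗ[R] M →ₗ[R] M) {c : C} (m : M)
    {ι : Type*} (𝓡 : Coalgebra.Repr R c ι) :
    act c m = ∑ i ∈ 𝓡.index, Coalgebra.counit (R := R) (𝓡.right i) • act (𝓡.left i) m := by
  conv_lhs => rw [← Coalgebra.sum_counit_right_smul 𝓡]
  simp only [map_sum, map_smul, LinearMap.sum_apply, LinearMap.smul_apply]

lemma HopfAlgebra.algHom_sum_mul_mul_antipode {R C ι : Type*} [CommRing R] [Ring C]
    [HopfAlgebra R C] (η : C →ₐ[R] R) {c : C} (𝓡 : Coalgebra.Repr R c ι) (g : C) :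
    η (∑ i ∈ 𝓡.index, 𝓡.left i * g * antipode R (𝓡.right i))
      = η g * Coalgebra.counit (R := R) c := by
  have hcomm : ∀ i, η (𝓡.left i * g * antipode R (𝓡.right i))
      = η g * η (𝓡.left i * antipode R (𝓡.right i)) := fun i => by
    simp only [map_mul]; ring
  rw [map_sum, Finset.sum_congr rfl fun i _ => hcomm i, ← Finset.mul_sum, ← map_sum,
    sum_mul_antipode_eq_smul, map_smul, map_one, smul_eq_mul, mul_one]

namespace Submodule.Quotient

variable {A : Type*} [Ring A] (I : Submodule A A)

open Classical in
/-- Computed on chosen representatives in `S`; `0` off `mk '' S`. -/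
def mulOn (S : Set A) (x y : A ⧸ I) : A ⧸ I :=
  if h : x ∈ mk '' S ∧ y ∈ mk '' S then mk (h.1.choose * h.2.choose) else 0

variable {I} {S : Set A}

lemma mk_mul_eq_of_mul_mem (hIS : ∀ x ∈ I, ∀ b ∈ S, x * b ∈ I) {a a' b b' : A}
    (hb' : b' ∈ S) (ha : (mk a : A ⧸ I) = mk a') (hb : (mk b : A ⧸ I) = mk b') :
    (mk (a * b) : A ⧸ I) = mk (a' * b') := by
  rw [Submodule.Quotient.eq] at ha hb ⊢
  rw [show a * b - a' * b' = a * (b - b') + (a - a') * b' by noncomm_ring]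
  exact I.add_mem (I.smul_mem a hb) (hIS _ ha _ hb')

lemma mulOn_mk (hIS : ∀ x ∈ I, ∀ b ∈ S, x * b ∈ I) {a b : A} (ha : a ∈ S) (hb : b ∈ S) :
    mulOn I S (mk a) (mk b) = mk (a * b) := by
  have h : (mk a : A ⧸ I) ∈ mk '' S ∧ (mk b : A ⧸ I) ∈ mk '' S := ⟨⟨a, ha, rfl⟩, ⟨b, hb, rfl⟩⟩
  rw [mulOn, dif_pos h]
  exact mk_mul_eq_of_mul_mem hIS hb h.1.choose_spec.2 h.2.choose_spec.2

end Submodule.Quotient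

lemma Subalgebra.exists_mul_on_image_quotient {R A : Type*} [CommSemiring R] [Ring A]
    [Algebra R A] {I : Submodule A A} (S : Subalgebra R A)
    (hIS : ∀ x ∈ I, ∀ b ∈ S, x * b ∈ I) :
    letI mk : A → A ⧸ I := Submodule.Quotient.mk
    letI T : Set (A ⧸ I) := mk '' S
    ∃ mul : (A ⧸ I) → (A ⧸ I) → (A ⧸ I),
      (∀ a b : A, a ∈ S → b ∈ S → mul (mk a) (mk b) = mk (a * b)) ∧
      (∀ x y, x ∈ T → y ∈ T → mul x y ∈ T) ∧
      (∀ x y z, x ∈ T → y ∈ T → z ∈ T → mul (mul x y) z = mul x (mul y z)) ∧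
      (mk 1 ∈ T) ∧
      (∀ x, x ∈ T → mul (mk 1) x = x ∧ mul x (mk 1) = x) ∧
      (∀ x y z, x ∈ T → y ∈ T → z ∈ T →
        mul x (y + z) = mul x y + mul x z ∧ mul (y + z) x = mul y x + mul z x) ∧
      (∀ (r : R) (x y), x ∈ T → y ∈ T →
        mul (r • x) y = r • mul x y ∧ mul x (r • y) = r • mul x y) := by
  have hmul {a b : A} (ha : a ∈ S) (hb : b ∈ S) :=
    Submodule.Quotient.mulOn_mk (S := (S : Set A)) hIS ha hb
  refine ⟨Submodule.Quotient.mulOn I S, fun a b => hmul, ?_, ?_, ⟨1, S.one_mem, rfl⟩, ?_, ?_, ?_⟩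
  · rintro _ _ ⟨a, ha, rfl⟩ ⟨b, hb, rfl⟩
    exact ⟨a * b, S.mul_mem ha hb, (hmul ha hb).symm⟩
  · rintro _ _ _ ⟨a, ha, rfl⟩ ⟨b, hb, rfl⟩ ⟨c, hc, rfl⟩
    rw [hmul ha hb, hmul hb hc, hmul (S.mul_mem ha hb) hc, hmul ha (S.mul_mem hb hc), mul_assoc]
  · rintro _ ⟨a, ha, rfl⟩
    rw [hmul S.one_mem ha, hmul ha S.one_mem, one_mul, mul_one]
    exact ⟨rfl, rfl⟩
  · rintro _ _ _ ⟨a, ha, rfl⟩ ⟨b, hb, rfl⟩ ⟨c, hc, rfl⟩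
    simp only [← Submodule.Quotient.mk_add, hmul ha (S.add_mem hb hc),
      hmul (S.add_mem hb hc) ha, hmul ha hb, hmul ha hc, hmul hb ha, hmul hc ha, mul_add, add_mul,
      and_self]
  · rintro r _ _ ⟨a, ha, rfl⟩ ⟨b, hb, rfl⟩
    simp only [← Submodule.Quotient.mk_smul, hmul (S.smul_mem ha r) hb,
      hmul ha (S.smul_mem hb r), hmul ha hb, smul_mul_assoc, mul_smul_comm, and_self]

/-- Representatives of the invariants of `M ⧸ J`. -/
def invariantsModulo {R C M : Type*} [CommRing R] [AddCommMonoid C] [Module R C]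
    [CoalgebraStruct R C] [AddCommGroup M] [Module R M] (act : C →ₗ[R] M →ₗ[R] M)
    (J : Submodule R M) : Submodule R M where
  carrier := {m | ∀ h, act h m - Coalgebra.counit (R := R) h • m ∈ J}
  add_mem' {m n} hm hn h := by
    simpa only [map_add, smul_add, add_sub_add_comm] using J.add_mem (hm h) (hn h)
  zero_mem' h := by simp
  smul_mem' r m hm h := by
    simpa only [map_smul, smul_sub, LinearMap.smul_apply, smul_comm r] using J.smul_mem r (hm h)

lemma one_mem_invariantsModulo {R C A : Type*} [CommRing R] [AddCommMonoid C] [Module R C]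
    [CoalgebraStruct R C] [Ring A] [Algebra R A] {act : C →ₗ[R] A →ₗ[R] A}
    (hunit : ∀ h, act h 1 = Coalgebra.counit (R := R) h • (1 : A)) (J : Submodule R A) :
    1 ∈ invariantsModulo act J := fun h => by simp [hunit]

lemma momentRHS_tmul_eq_sum (act : H →ₗ[ℂ] D →ₗ[ℂ] D) (ν : H →ₗ[ℂ] D) {h : H} (a : D) {ι : Type*}
    (𝓡 : Coalgebra.Repr ℂ h ι) :
    momentRHS act ν (h ⊗ₜ[ℂ] a) = ∑ i ∈ 𝓡.index, act (𝓡.left i) a * ν (𝓡.right i) := by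
  simp only [momentRHS, LinearMap.coe_comp, Function.comp_apply, TensorProduct.map_tmul,
    LinearMap.id_coe, id_eq, ← 𝓡.eq, TensorProduct.sum_tmul, map_sum,
    LinearEquiv.coe_coe, TensorProduct.assoc_tmul, TensorProduct.comm_tmul,
    TensorProduct.assoc_symm_tmul, TensorProduct.lift.tmul, LinearMap.mul'_apply]

lemma moduleAlgebraRHS_tmul_eq_sum (act : H →ₗ[ℂ] D →ₗ[ℂ] D) {h : H} (a b : D) {ι : Type*}
    (𝓡 : Coalgebra.Repr ℂ h ι) :
    moduleAlgebraRHS act (h ⊗ₜ[ℂ] (a ⊗ₜ[ℂ] b))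
      = ∑ i ∈ 𝓡.index, act (𝓡.left i) a * act (𝓡.right i) b := by
  simp only [moduleAlgebraRHS, LinearMap.coe_comp, Function.comp_apply, TensorProduct.map_tmul,
    LinearMap.id_coe, id_eq, ← 𝓡.eq, TensorProduct.sum_tmul, map_sum,
    LinearEquiv.coe_coe, TensorProduct.tensorTensorTensorComm_tmul,
    TensorProduct.lift.tmul, LinearMap.mul'_apply]

lemma mul_mem_invariantsModulo {act : H →ₗ[ℂ] D →ₗ[ℂ] D}
    (hma : ∀ (h : H) (a b : D), act h (a * b) = moduleAlgebraRHS act (h ⊗ₜ[ℂ] (a ⊗ₜ[ℂ] b)))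
    {I : Submodule D D}
    (hI : ∀ x ∈ I, ∀ b ∈ invariantsModulo act (I.restrictScalars ℂ), x * b ∈ I) {a b : D}
    (ha : a ∈ invariantsModulo act (I.restrictScalars ℂ))
    (hb : b ∈ invariantsModulo act (I.restrictScalars ℂ)) :
    a * b ∈ invariantsModulo act (I.restrictScalars ℂ) := by
  intro h
  let 𝓡 := Coalgebra.Repr.arbitrary ℂ h
  have key : act h (a * b) - Coalgebra.counit (R := ℂ) h • (a * b)
      = ∑ i ∈ 𝓡.index, act (𝓡.left i) a *
          (act (𝓡.right i) b - Coalgebra.counit (R := ℂ) (𝓡.right i) • b)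
        + (act h a - Coalgebra.counit (R := ℂ) h • a) * b := by
    rw [hma, moduleAlgebraRHS_tmul_eq_sum act a b 𝓡, act_eq_sum_counit_smul act a 𝓡]
    simp only [mul_sub, Finset.sum_sub_distrib, sub_mul, Finset.sum_mul, mul_smul_comm,
      smul_mul_assoc]
    abel
  rw [key]
  exact I.add_mem (I.sum_mem fun i _ => I.smul_mem _ (hb _)) (hI _ (ha h) b hb)

def IsQuantumMomentMap (act : H →ₗ[ℂ] D →ₗ[ℂ] D) (μ : H →ₐ[ℂ] D) : Prop :=
  ∀ (h : H) (a : D), μ h * a = momentRHS act μ.toLinearMap (h ⊗ₜ[ℂ] a)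

def momentIdeal (μ : H →ₐ[ℂ] D) (η : H →ₐ[ℂ] ℂ) : Submodule D D :=
  Submodule.span D (Set.range fun h : H => μ h - algebraMap ℂ D (η h))

lemma sub_algebraMap_mem_momentIdeal (μ : H →ₐ[ℂ] D) (η : H →ₐ[ℂ] ℂ) (h : H) :
    μ h - algebraMap ℂ D (η h) ∈ momentIdeal μ η :=
  Submodule.subset_span ⟨h, rfl⟩

namespace IsQuantumMomentMap

variable {act : H →ₗ[ℂ] D →ₗ[ℂ] D} {μ : H →ₐ[ℂ] D} {η : H →ₐ[ℂ] ℂ}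

lemma mul_eq_sum (hμ : IsQuantumMomentMap act μ) {h : H} (a : D) {ι : Type*}
    (𝓡 : Coalgebra.Repr ℂ h ι) :
    μ h * a = ∑ i ∈ 𝓡.index, act (𝓡.left i) a * μ (𝓡.right i) :=
  (hμ h a).trans (momentRHS_tmul_eq_sum act μ.toLinearMap a 𝓡)

lemma mul_sub_sum_mem_momentIdeal (hμ : IsQuantumMomentMap act μ) {h : H} (a : D) {ι : Type*}
    (𝓡 : Coalgebra.Repr ℂ h ι) :
    μ h * a - ∑ i ∈ 𝓡.index, η (𝓡.right i) • act (𝓡.left i) a ∈ momentIdeal μ η := by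
  rw [hμ.mul_eq_sum a 𝓡, ← Finset.sum_sub_distrib]
  refine Submodule.sum_mem _ fun i _ => ?_
  rw [Algebra.smul_def, Algebra.commutes, ← mul_sub]
  exact Submodule.smul_mem _ _ (sub_algebraMap_mem_momentIdeal μ η _)

lemma mul_sub_smul_mem_momentIdeal (hμ : IsQuantumMomentMap act μ) {a : D}
    (ha : a ∈ invariantsModulo act ((momentIdeal μ η).restrictScalars ℂ)) (h : H) :
    μ h * a - η h • a ∈ momentIdeal μ η := by
  let 𝓡 := Coalgebra.Repr.arbitrary ℂ h
  have hη : η h = ∑ i ∈ 𝓡.index, Coalgebra.counit (R := ℂ) (𝓡.left i) * η (𝓡.right i) := by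
    conv_lhs => rw [← Coalgebra.sum_counit_smul 𝓡]
    simp only [map_sum, map_smul, smul_eq_mul]
  have key : μ h * a - η h • a = (μ h * a - ∑ i ∈ 𝓡.index, η (𝓡.right i) • act (𝓡.left i) a)
      + ∑ i ∈ 𝓡.index, η (𝓡.right i) •
          (act (𝓡.left i) a - Coalgebra.counit (R := ℂ) (𝓡.left i) • a) := by
    simp only [hη, smul_sub, Finset.sum_sub_distrib, smul_smul, Finset.sum_smul, mul_comm]
    abel
  rw [key]
  exact Submodule.add_mem _ (hμ.mul_sub_sum_mem_momentIdeal a 𝓡)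
    (Submodule.sum_mem _ fun i _ => Submodule.smul_of_tower_mem _ _ (ha _))

lemma mul_mem_momentIdeal (hμ : IsQuantumMomentMap act μ) {x : D} (hx : x ∈ momentIdeal μ η)
    {b : D} (hb : b ∈ invariantsModulo act ((momentIdeal μ η).restrictScalars ℂ)) :
    x * b ∈ momentIdeal μ η := by
  induction hx using Submodule.span_induction with
  | mem _ hx =>
    obtain ⟨g, rfl⟩ := hx
    rw [sub_mul, ← Algebra.smul_def]
    exact hμ.mul_sub_smul_mem_momentIdeal hb g
  | zero => simp
  | add x y _ _ hx hy => rw [add_mul]; exact Submodule.add_mem _ hx hy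
  | smul d x _ hx => rw [smul_eq_mul, mul_assoc]; exact Submodule.smul_mem _ d hx

lemma act_apply_eq_adjoint (hμ : IsQuantumMomentMap act μ) (g : H) {h : H} {ι : Type*}
    (𝓡 : Coalgebra.Repr ℂ h ι) :
    act h (μ g) = μ (∑ i ∈ 𝓡.index, 𝓡.left i * g * HopfAlgebra.antipode ℂ (𝓡.right i)) := by
  let S := HopfAlgebra.antipode ℂ (A := H)
  let 𝓡₁ i := Coalgebra.Repr.arbitrary ℂ (𝓡.left i)
  let 𝓡₂ i := Coalgebra.Repr.arbitrary ℂ (𝓡.right i)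
  let Ψ : H ⊗[ℂ] (H ⊗[ℂ] H) →ₗ[ℂ] D :=
    LinearMap.mul' ℂ D ∘ₗ TensorProduct.map (act.flip (μ g))
      (TensorProduct.lift (((LinearMap.mul ℂ H).compl₂ S).compr₂ μ.toLinearMap))
  have hΨ x y z : Ψ (x ⊗ₜ (y ⊗ₜ z)) = act x (μ g) * μ (y * S z) := by simp [Ψ]
  have coassoc := congr(Ψ $(Coalgebra.sum_tmul_tmul_eq 𝓡 𝓡₁ 𝓡₂))
  simp only [map_sum, hΨ] at coassoc
  calc act h (μ g)
      = ∑ i ∈ 𝓡.index, Coalgebra.counit (R := ℂ) (𝓡.right i) • act (𝓡.left i) (μ g) :=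
        act_eq_sum_counit_smul act _ 𝓡
    _ = ∑ i ∈ 𝓡.index, ∑ j ∈ (𝓡₂ i).index,
          act (𝓡.left i) (μ g) * μ ((𝓡₂ i).left j * S ((𝓡₂ i).right j)) := by
        refine Finset.sum_congr rfl fun i _ => ?_
        rw [← Finset.mul_sum, ← map_sum, HopfAlgebra.sum_mul_antipode_eq_smul, map_smul,
          map_one, mul_smul_comm, mul_one]
    _ = ∑ i ∈ 𝓡.index, ∑ j ∈ (𝓡₁ i).index,
          act ((𝓡₁ i).left j) (μ g) * μ ((𝓡₁ i).right j * S (𝓡.right i)) := coassoc.symm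
    _ = μ (∑ i ∈ 𝓡.index, 𝓡.left i * g * S (𝓡.right i)) := by
        rw [map_sum]
        refine Finset.sum_congr rfl fun i _ => ?_
        rw [map_mul, map_mul, hμ.mul_eq_sum (μ g) (𝓡₁ i), Finset.sum_mul]
        refine Finset.sum_congr rfl fun j _ => ?_
        rw [mul_assoc, ← map_mul]

lemma act_mem_momentIdeal (hμ : IsQuantumMomentMap act μ)
    (hma : ∀ (h : H) (a b : D), act h (a * b) = moduleAlgebraRHS act (h ⊗ₜ[ℂ] (a ⊗ₜ[ℂ] b)))
    (hunit : ∀ h : H, act h 1 = Coalgebra.counit (R := ℂ) h • (1 : D))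
    {x : D} (hx : x ∈ momentIdeal μ η) (h : H) :
    act h x ∈ momentIdeal μ η := by
  induction hx using Submodule.span_induction generalizing h with
  | mem _ hx =>
    obtain ⟨g, rfl⟩ := hx
    let 𝓡 := Coalgebra.Repr.arbitrary ℂ h
    have hunit' : act h (algebraMap ℂ D (η g)) = algebraMap ℂ D
        (η (∑ i ∈ 𝓡.index, 𝓡.left i * g * HopfAlgebra.antipode ℂ (𝓡.right i))) := by
      rw [HopfAlgebra.algHom_sum_mul_mul_antipode, Algebra.algebraMap_eq_smul_one, map_smul,
        hunit, smul_smul, Algebra.algebraMap_eq_smul_one]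
    rw [map_sub, hμ.act_apply_eq_adjoint g 𝓡, hunit']
    exact sub_algebraMap_mem_momentIdeal μ η _
  | zero => simp
  | add x y _ _ hx hy => rw [map_add]; exact Submodule.add_mem _ (hx h) (hy h)
  | smul d x _ hx =>
    rw [smul_eq_mul, hma, moduleAlgebraRHS_tmul_eq_sum act d x (Coalgebra.Repr.arbitrary ℂ h)]
    exact Submodule.sum_mem _ fun i _ => Submodule.smul_mem _ _ (hx _)

end IsQuantumMomentMap

theorem quantum_hamiltonian_reduction_general
    (act : H →ₗ[ℂ] D →ₗ[ℂ] D)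
    -- `D` is an `H`-module algebra:
    (hma : ∀ (h : H) (a b : D),
      act h (a * b) = moduleAlgebraRHS act (h ⊗ₜ[ℂ] (a ⊗ₜ[ℂ] b)))
    (hunit : ∀ h : H, act h 1 = (Coalgebra.counit (R := ℂ) h) • (1 : D))
    -- `μ` is a quantum moment map:
    (μ : H →ₐ[ℂ] D)
    (hμ : ∀ (h : H) (a : D), μ h * a = momentRHS act μ.toLinearMap (h ⊗ₜ[ℂ] a))
    -- a character of `H`:
    (η : H →ₐ[ℂ] ℂ) :
    letI Iη : Submodule D D :=
      Submodule.span D (Set.range fun h : H => μ h - algebraMap ℂ D (η h))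
    letI Inv : D → Prop := fun a =>
      ∀ h : H, act h a - (Coalgebra.counit (R := ℂ) h) • a ∈ Iη
    letI mk : D → D ⧸ Iη := Submodule.Quotient.mk
    letI InvQ : (D ⧸ Iη) → Prop := fun x => ∃ a, Inv a ∧ mk a = x
    -- (1) `I_η` is an `H`-submodule:
    (∀ (h : H) (a : D), a ∈ Iη → act h a ∈ Iη) ∧
    -- (2) multiplication descends to a well-defined associative unital ℂ-bilinear
    -- product on the `H`-invariants of `D/I_η`:
    (∃ mul : (D ⧸ Iη) → (D ⧸ Iη) → (D ⧸ Iη),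
      (∀ a b : D, Inv a → Inv b → mul (mk a) (mk b) = mk (a * b)) ∧
      (∀ x y, InvQ x → InvQ y → InvQ (mul x y)) ∧
      (∀ x y z, InvQ x → InvQ y → InvQ z → mul (mul x y) z = mul x (mul y z)) ∧
      (InvQ (mk 1)) ∧
      (∀ x, InvQ x → mul (mk 1) x = x ∧ mul x (mk 1) = x) ∧
      (∀ x y z, InvQ x → InvQ y → InvQ z →
        mul x (y + z) = mul x y + mul x z ∧ mul (y + z) x = mul y x + mul z x) ∧
      (∀ (r : ℂ) (x y), InvQ x → InvQ y →
        mul (r • x) y = r • mul x y ∧ mul x (r • y) = r • mul x y)) := by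
  have hI : ∀ x ∈ momentIdeal μ η,
      ∀ b ∈ invariantsModulo act ((momentIdeal μ η).restrictScalars ℂ), x * b ∈ momentIdeal μ η :=
    fun _ hx _ hb => IsQuantumMomentMap.mul_mem_momentIdeal hμ hx hb
  let S : Subalgebra ℂ D :=
    (invariantsModulo act ((momentIdeal μ η).restrictScalars ℂ)).toSubalgebra
      (one_mem_invariantsModulo hunit _) fun _ _ => mul_mem_invariantsModulo hma hI
  exact ⟨fun h _ hx => IsQuantumMomentMap.act_mem_momentIdeal hμ hma hunit hx h,
    S.exists_mul_on_image_quotient hI⟩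

/-- let `H` be a Hopf algebra, `D` an `H`-module algebra (action `▷`),
`μ : H → D` a quantum moment map, i.e. `μ(h)·a = Σ (h₍₁₎ ▷ a)·μ(h₍₂₎)`, and
`η : H → ℂ` a character.  Let `I_η` be the left ideal of `D` generated by the elements
`μ(h) − η(h)·1`.  Then `I_η` is an `H`-submodule of `D`, and the multiplication of `D`
induces a well-defined associative (unital, ℂ-bilinear) algebra structure on the
`H`-invariants of `D/I_η`. -/
theorem quantum_hamiltonian_reduction
    (act : H →ₗ[ℂ] D →ₗ[ℂ] D)
    -- `D` is an `H`-module: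
    (hact_one : ∀ a : D, act 1 a = a)
    (hact_mul : ∀ (h h' : H) (a : D), act (h * h') a = act h (act h' a))
    -- `D` is an `H`-module algebra:
    (hma : ∀ (h : H) (a b : D),
      act h (a * b) = moduleAlgebraRHS act (h ⊗ₜ[ℂ] (a ⊗ₜ[ℂ] b)))
    (hunit : ∀ h : H, act h 1 = (Coalgebra.counit (R := ℂ) h) • (1 : D))
    -- `μ` is a quantum moment map:
    (μ : H →ₐ[ℂ] D)
    (hμ : ∀ (h : H) (a : D), μ h * a = momentRHS act μ.toLinearMap (h ⊗ₜ[ℂ] a))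
    -- a character of `H`:
    (η : H →ₐ[ℂ] ℂ) :
    letI Iη : Submodule D D :=
      Submodule.span D (Set.range fun h : H => μ h - algebraMap ℂ D (η h))
    letI Inv : D → Prop := fun a =>
      ∀ h : H, act h a - (Coalgebra.counit (R := ℂ) h) • a ∈ Iη
    letI mk : D → D ⧸ Iη := Submodule.Quotient.mk
    letI InvQ : (D ⧸ Iη) → Prop := fun x => ∃ a, Inv a ∧ mk a = x
    -- (1) `I_η` is an `H`-submodule:
    (∀ (h : H) (a : D), a ∈ Iη → act h a ∈ Iη) ∧
    -- (2) multiplication descends to a well-defined associative unital ℂ-bilinear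
    -- product on the `H`-invariants of `D/I_η`:
    (∃ mul : (D ⧸ Iη) → (D ⧸ Iη) → (D ⧸ Iη),
      (∀ a b : D, Inv a → Inv b → mul (mk a) (mk b) = mk (a * b)) ∧
      (∀ x y, InvQ x → InvQ y → InvQ (mul x y)) ∧
      (∀ x y z, InvQ x → InvQ y → InvQ z → mul (mul x y) z = mul x (mul y z)) ∧
      (InvQ (mk 1)) ∧
      (∀ x, InvQ x → mul (mk 1) x = x ∧ mul x (mk 1) = x) ∧
      (∀ x y z, InvQ x → InvQ y → InvQ z →
        mul x (y + z) = mul x y + mul x z ∧ mul (y + z) x = mul y x + mul z x) ∧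
      (∀ (r : ℂ) (x y), InvQ x → InvQ y →
        mul (r • x) y = r • mul x y ∧ mul x (r • y) = r • mul x y)) :=
  quantum_hamiltonian_reduction_general act hma hunit μ hμ η
end
end
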